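/- Let u be a bidirectional c-balanced infinite word over a finite alphabet A with letter frequencies ρ_a. Then for every factor w of u and every letter a ∈ A one has ||w|_a − ρ_a·|w|| ≤ c. -/

import Mathlib

/-!
Cut `w = u[i, i + n)` out of `u` and extend it to `u[i, i + m n)`, a concatenation of `m`
factors of length `n`. Each block has, by balance, within `c` as many letters `a` as `w`, so
`|u[i, i + m n)|_a / m` stays within `c` of `|w|_a`; as `m → ∞` it tends to `ρ_a n` by the
definition of the frequency, and the closed condition `||w|_a − x| ≤ c` passes to the limit.
-/

open Filter Topology

/-- `w` is a factor of the bidirectional infinite word `u : ℤ → A`. -/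
def IsFactor {A : Type*} (u : ℤ → A) (w : List A) : Prop :=
  ∃ i : ℤ, w = (List.range w.length).map (fun k => u (i + k))

section

variable {A : Type*}

def window (u : ℤ → A) (i : ℤ) (n : ℕ) : List A :=
  (List.range n).map fun k : ℕ => u (i + k)

@[simp]
theorem length_window (u : ℤ → A) (i : ℤ) (n : ℕ) : (window u i n).length = n := by
  simp [window]

theorem window_add (u : ℤ → A) (i : ℤ) (m n : ℕ) :
    window u i (m + n) = window u i m ++ window u (i + m) n := by
  simp only [window, List.range_add, List.map_append, List.map_map]
  congr 1
  refine List.map_congr_left fun k _ => ?_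
  simp [add_assoc]

theorem isFactor_iff_exists_eq_window {u : ℤ → A} {w : List A} :
    IsFactor u w ↔ ∃ i : ℤ, w = window u i w.length := by
  refine exists_congr fun i => Eq.congr_right ?_
  -- in `IsFactor`, `List.range w.length` is coerced to a `List ℤ` through the list monad
  change List.map _ ((List.range w.length).flatMap (pure ∘ ((↑) : ℕ → ℤ))) = _
  rw [List.flatMap_pure_eq_map, List.map_map]
  rfl

theorem isFactor_window (u : ℤ → A) (i : ℤ) (n : ℕ) : IsFactor u (window u i n) :=
  isFactor_iff_exists_eq_window.2 ⟨i, by rw [length_window]⟩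

variable [DecidableEq A]

def IsBalanced (u : ℤ → A) (c : ℝ) : Prop :=
  ∀ w v : List A, IsFactor u w → IsFactor u v → w.length = v.length →
    ∀ a : A, |(w.count a : ℝ) - (v.count a : ℝ)| ≤ c

def HasFrequency (u : ℤ → A) (a : A) (r : ℝ) : Prop :=
  ∀ ε : ℝ, 0 < ε → ∃ N : ℕ, ∀ w : List A, IsFactor u w →
    N ≤ w.length → |(w.count a : ℝ) / (w.length : ℝ) - r| < ε

theorem IsBalanced.nonneg {u : ℤ → A} {c : ℝ} (h : IsBalanced u c) (a : A) : 0 ≤ c := by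
  simpa using h [] [] ⟨0, rfl⟩ ⟨0, rfl⟩ rfl a

theorem IsBalanced.abs_count_window_mul_sub_le {u : ℤ → A} {c : ℝ} (h : IsBalanced u c)
    (a : A) (i : ℤ) (n m : ℕ) :
    |((window u i (m * n)).count a : ℝ) - m * (window u i n).count a| ≤ m * c := by
  induction m with
  | zero => simp [window]
  | succ m ih =>
    have hblock := h _ _ (isFactor_window u (i + (m * n : ℕ)) n) (isFactor_window u i n)
      (by simp) a
    rw [add_mul, one_mul, window_add, List.count_append]
    simp only [Nat.cast_add, Nat.cast_one]
    calc _ = |((window u i (m * n)).count a - m * (window u i n).count a : ℝ) +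
            ((window u (i + (m * n : ℕ)) n).count a - (window u i n).count a)| := by
          congr 1; ring
      _ ≤ m * c + c := (abs_add_le _ _).trans (add_le_add ih hblock)
      _ = (m + 1) * c := by ring

theorem HasFrequency.tendsto {u : ℤ → A} {a : A} {r : ℝ} (h : HasFrequency u a r)
    {ws : ℕ → List A} (hws : ∀ m, IsFactor u (ws m))
    (hlen : Tendsto (fun m => (ws m).length) atTop atTop) :
    Tendsto (fun m => ((ws m).count a : ℝ) / (ws m).length) atTop (𝓝 r) := by
  refine Metric.tendsto_atTop.2 fun ε hε => ?_
  obtain ⟨N, hN⟩ := h ε hε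
  obtain ⟨M, hM⟩ := tendsto_atTop_atTop.1 hlen N
  exact ⟨M, fun m hm => hN _ (hws m) (hM m hm)⟩

theorem abs_count_window_sub_mul_le {u : ℤ → A} {c : ℝ} (hbal : IsBalanced u c) {a : A}
    {r : ℝ} (hfreq : HasFrequency u a r) (i : ℤ) (n : ℕ) :
    |((window u i n).count a : ℝ) - r * n| ≤ c := by
  rcases Nat.eq_zero_or_pos n with rfl | hn
  · simpa [window] using hbal.nonneg a
  have hlim : Tendsto (fun m : ℕ => ((window u i (m * n)).count a : ℝ) / (m * n : ℕ))
      atTop (𝓝 r) := by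
    simpa using hfreq.tendsto (fun m => isFactor_window u i (m * n))
      (by simpa using tendsto_id.atTop_mul_const' hn)
  refine le_of_tendsto ((hlim.mul_const (n : ℝ)).const_sub _).abs ?_
  filter_upwards [eventually_gt_atTop 0] with m hm
  have hm' : (0 : ℝ) < m := by exact_mod_cast hm
  have hn' : (0 : ℝ) < n := by exact_mod_cast hn
  have hbound := hbal.abs_count_window_mul_sub_le a i n m
  have hdiv : ((window u i n).count a : ℝ) - (window u i (m * n)).count a / (m * n : ℕ) * n =
      -(((window u i (m * n)).count a - m * (window u i n).count a) / m) := by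
    push_cast
    field_simp
    ring
  rw [hdiv, abs_neg, abs_div, abs_of_pos hm', div_le_iff₀ hm', mul_comm c]
  exact hbound

end

theorem balanced_count_close_to_frequency_general {A : Type*} [DecidableEq A]
    (u : ℤ → A) (c : ℝ)
    (hbal : ∀ w v : List A, IsFactor u w → IsFactor u v → w.length = v.length →
      ∀ a : A, |(w.count a : ℝ) - (v.count a : ℝ)| ≤ c)
    (ρ : A → ℝ)
    (hfreq : ∀ a : A, ∀ ε : ℝ, 0 < ε → ∃ N : ℕ, ∀ w : List A, IsFactor u w →
      N ≤ w.length → |(w.count a : ℝ) / (w.length : ℝ) - ρ a| < ε) :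
    ∀ w : List A, IsFactor u w → ∀ a : A,
      |(w.count a : ℝ) - ρ a * (w.length : ℝ)| ≤ c := by
  intro w hw a
  obtain ⟨i, hi⟩ := isFactor_iff_exists_eq_window.1 hw
  rw [hi]
  simpa using abs_count_window_sub_mul_le hbal (hfreq a) i w.length

/-- if `u` is c-balanced and `ρ a` is the frequency of the letter `a`
(i.e. the limit of `|w|_a/|w|` over factors `w` of `u` with `|w| → ∞`), then
for every factor `w` of `u` and every letter `a` one has `||w|_a − ρ_a·|w|| ≤ c`. -/
theorem balanced_count_close_to_frequency {A : Type*} [Fintype A] [DecidableEq A]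
    (u : ℤ → A) (c : ℝ) (hc : 0 < c)
    (hbal : ∀ w v : List A, IsFactor u w → IsFactor u v → w.length = v.length →
      ∀ a : A, |(w.count a : ℝ) - (v.count a : ℝ)| ≤ c)
    (ρ : A → ℝ)
    (hfreq : ∀ a : A, ∀ ε : ℝ, 0 < ε → ∃ N : ℕ, ∀ w : List A, IsFactor u w →
      N ≤ w.length → |(w.count a : ℝ) / (w.length : ℝ) - ρ a| < ε) :
    ∀ w : List A, IsFactor u w → ∀ a : A,
      |(w.count a : ℝ) - ρ a * (w.length : ℝ)| ≤ c :=
  balanced_count_close_to_frequency_general u c hbal ρ hfreq
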